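/- arXiv:2508.10276 — 2 statements merged into one kernel-verified Lean document; each statement's English description precedes it below -/
import Mathlib

section
/- Let V be a finite-dimensional vector space over a field and let P : V → V be a linear projection (P ∘ P = P). For any basis v₁, …, vₙ of V there exists an index set I ⊆ {1, …, n} with |I| = dim(range P) such that the family {P vₐ : a ∈ I} ∪ {(1 − P) v_b : b ∉ I} is a basis of V. -/
/-- For a projection `P` on a finite-dimensional vector space and any basis `v`,
there is an index set `I` of size `dim (range P)` such that replacing `v a` by `P (v a)`
for `a ∈ I` and by `(1 - P) (v a)` for `a ∉ I` again yields a basis. -/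
theorem stmt0 {K V : Type*} [Field K] [AddCommGroup V] [Module K V]
    [FiniteDimensional K V] (P : V →ₗ[K] V) (hP : P ∘ₗ P = P)
    {n : ℕ} (v : Module.Basis (Fin n) K V) :
    ∃ I : Finset (Fin n),
      I.card = Module.finrank K (LinearMap.range P) ∧
      LinearIndependent K (fun a : Fin n => if a ∈ I then P (v a) else v a - P (v a)) ∧
      Submodule.span K
        (Set.range (fun a : Fin n => if a ∈ I then P (v a) else v a - P (v a))) = ⊤ := by
  classical
  have hPP : ∀ x, P (P x) = P x := fun x => congrFun (congrArg DFunLike.coe hP) x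
  set w : Finset (Fin n) → Fin n → V :=
    fun I a => if a ∈ I then P (v a) else v a - P (v a) with hw
  -- determinant expansion
  have key : ∑ I : Finset (Fin n), v.det (w I) = 1 := by
    have h := (v.det.toMultilinearMap).map_add_univ
      (fun a => P (v a)) (fun a => v a - P (v a))
    have hv : (fun a => P (v a)) + (fun a => v a - P (v a)) = v := by
      funext a; simp
    rw [hv] at h
    simp only [AlternatingMap.coe_multilinearMap] at h
    rw [v.det_self] at h
    refine Eq.trans ?_ h.symm
    refine Finset.sum_congr rfl fun I _ => ?_
    congr 1
  obtain ⟨I, hI⟩ : ∃ I : Finset (Fin n), v.det (w I) ≠ 0 := by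
    by_contra h
    push_neg at h
    rw [Finset.sum_congr rfl (fun I _ => h I)] at key
    simp at key
  have hunit : IsUnit (v.det (w I)) := isUnit_iff_ne_zero.mpr hI
  obtain ⟨hli, hspan⟩ := (Module.Basis.is_basis_iff_det v).mpr hunit
  refine ⟨I, ?_, hli, hspan⟩
  -- cardinality
  have hmemR : ∀ a ∈ I, w I a ∈ LinearMap.range P := by
    intro a ha
    simp only [hw, if_pos ha]
    exact ⟨v a, rfl⟩
  have hmemK : ∀ a ∈ Iᶜ, w I a ∈ LinearMap.ker P := by
    intro a ha
    have ha' : a ∉ I := by simpa using ha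
    simp only [hw, if_neg ha', LinearMap.mem_ker, map_sub, hPP, sub_self]
  -- |I| ≤ finrank range P
  have h1 : I.card ≤ Module.finrank K (LinearMap.range P) := by
    have hli' : LinearIndependent K (fun a : I => (⟨w I a, hmemR a a.2⟩ :
        LinearMap.range P)) := by
      have := (hli.comp (fun a : I => (a : Fin n)) Subtype.coe_injective)
      exact this.of_comp (LinearMap.range P).subtype
    simpa using hli'.fintype_card_le_finrank
  have h2 : n ≤ Module.finrank K (LinearMap.ker P) + I.card := by
    have hli' : LinearIndependent K (fun a : (Iᶜ : Finset (Fin n)) => (⟨w I a, hmemK a a.2⟩ :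
        LinearMap.ker P)) := by
      have := (hli.comp (fun a : (Iᶜ : Finset (Fin n)) => (a : Fin n)) Subtype.coe_injective)
      exact this.of_comp (LinearMap.ker P).subtype
    have := hli'.fintype_card_le_finrank
    simpa [Fintype.card_coe] using this
  have hrn : Module.finrank K (LinearMap.range P) + Module.finrank K (LinearMap.ker P)
      = Module.finrank K V := LinearMap.finrank_range_add_finrank_ker P
  have hn : Module.finrank K V = n := by
    rw [Module.finrank_eq_card_basis v, Fintype.card_fin]
  have hcard : I.card + Iᶜ.card = n := by
    rw [Finset.card_compl, Fintype.card_fin]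
    omega
  omega
end

section
/- Let σ be a finite index type, w : σ → ℕ a weight function with w_a ≥ 1 for all a, and f ∈ ℝ[X_s : s ∈ σ] a multivariate polynomial. Then every monomial of f has weighted degree ≥ i if and only if for every λ : σ → ℝ, the univariate polynomial t ↦ f(t^{w_1}λ_1, …, t^{w_n}λ_n) is divisible by t^i (equivalently, all its coefficients in degrees < i vanish). -/
open Polynomial MvPolynomial in
private lemma stmt9_phi_monomial {σ : Type*} [Fintype σ] (w : σ → ℕ) (d : σ →₀ ℕ) (r : ℝ) :
    (MvPolynomial.aeval (fun a => Polynomial.C (MvPolynomial.X a : MvPolynomial σ ℝ) *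
        Polynomial.X ^ (w a)) (MvPolynomial.monomial d r))
      = Polynomial.C (MvPolynomial.monomial d r) * Polynomial.X ^ (∑ a, d a * w a) := by
  classical
  rw [MvPolynomial.aeval_monomial, MvPolynomial.monomial_eq]
  have hsum : (∑ a, d a * w a) = ∑ a ∈ d.support, d a * w a := by
    refine (Finset.sum_subset (Finset.subset_univ _) ?_).symm
    intro a _ ha
    simp [Finsupp.notMem_support_iff.mp ha]
  rw [hsum]
  simp only [Finsupp.prod, mul_pow, Finset.prod_mul_distrib, ← Polynomial.C_pow, ← pow_mul]
  rw [Finset.prod_pow_eq_pow_sum]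
  have h2 : (∑ a ∈ d.support, w a * d a) = ∑ a ∈ d.support, d a * w a :=
    Finset.sum_congr rfl fun a _ => Nat.mul_comm _ _
  rw [h2, ← map_prod (Polynomial.C : MvPolynomial σ ℝ →+* _), map_mul]
  have h3 : (algebraMap ℝ (Polynomial (MvPolynomial σ ℝ))) r
      = Polynomial.C (MvPolynomial.C r) := by
    simp [Polynomial.algebraMap_apply]
  rw [h3]
  ring

/-- For weights `w_a ≥ 1`, every monomial of `f ∈ ℝ[X_a]` has weighted degree `≥ i`
iff for every `λ : σ → ℝ` the one-variable polynomial `t ↦ f(t^{w_a} λ_a)` is divisible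
by `t^i`. -/
theorem stmt9 {σ : Type*} [Fintype σ] (w : σ → ℕ) (hw : ∀ a, 1 ≤ w a)
    (f : MvPolynomial σ ℝ) (i : ℕ) :
    (∀ d : σ →₀ ℕ, MvPolynomial.coeff d f ≠ 0 → i ≤ ∑ a, d a * w a) ↔
    ∀ lam : σ → ℝ, (Polynomial.X : Polynomial ℝ) ^ i ∣
      MvPolynomial.aeval (fun a => Polynomial.C (lam a) * Polynomial.X ^ (w a)) f := by
  classical
  set Φ : MvPolynomial σ ℝ →ₐ[ℝ] Polynomial (MvPolynomial σ ℝ) :=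
    MvPolynomial.aeval (fun a => Polynomial.C (MvPolynomial.X a) * Polynomial.X ^ (w a))
    with hΦ
  -- relation between the concrete evaluation and Φ
  have hmap : ∀ (lam : σ → ℝ),
      (MvPolynomial.aeval (fun a => Polynomial.C (lam a) * Polynomial.X ^ (w a)) f
        : Polynomial ℝ)
        = Polynomial.map (MvPolynomial.eval lam) (Φ f) := by
    intro lam
    induction f using MvPolynomial.induction_on with
    | C r => simp [hΦ]
    | add p q hp hq => simp [hp, hq, hΦ]
    | mul_X p a hp => simp [hp, hΦ, Polynomial.map_mul]
  -- coefficients of Φ f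
  have key : ∀ (k : ℕ) (d : σ →₀ ℕ), MvPolynomial.coeff d ((Φ f).coeff k) =
      if (∑ a, d a * w a) = k then MvPolynomial.coeff d f else 0 := by
    intro k d
    conv_lhs => rw [f.as_sum, map_sum Φ]
    rw [Polynomial.finset_sum_coeff]
    rw [MvPolynomial.coeff_sum]
    have : ∀ e ∈ f.support, MvPolynomial.coeff d
        ((Φ (MvPolynomial.monomial e (MvPolynomial.coeff e f))).coeff k)
        = if e = d ∧ (∑ a, d a * w a) = k then MvPolynomial.coeff d f else 0 := by
      intro e _
      rw [hΦ, stmt9_phi_monomial, Polynomial.coeff_C_mul, Polynomial.coeff_X_pow,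
        mul_ite, mul_one, mul_zero]
      by_cases hed : e = d
      · subst hed
        by_cases hk : (∑ a, e a * w a) = k
        · simp [hk]
        · simp [hk, Ne.symm hk]
      · by_cases hk : k = ∑ a, e a * w a <;>
          simp [hk, MvPolynomial.coeff_monomial, hed]
    rw [Finset.sum_congr rfl this]
    simp only [ite_and]
    rw [Finset.sum_ite_eq' f.support d]
    by_cases hd : d ∈ f.support
    · simp [hd]
    · simp [hd, MvPolynomial.notMem_support_iff.mp hd]
  constructor
  · intro h lam
    rw [hmap lam]
    have hdvd : (Polynomial.X : Polynomial (MvPolynomial σ ℝ)) ^ i ∣ Φ f := by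
      rw [Polynomial.X_pow_dvd_iff]
      intro k hk
      ext d
      rw [key k d]
      split_ifs with hwd
      · by_contra hne
        exact absurd (h d hne) (by omega)
      · simp
    have := Polynomial.map_dvd (MvPolynomial.eval lam : MvPolynomial σ ℝ →+* ℝ) hdvd
    simpa using this
  · intro h d hd
    by_contra hlt
    push_neg at hlt
    set k := ∑ a, d a * w a with hk
    set g : MvPolynomial σ ℝ := (Φ f).coeff k with hg
    have hgne : g ≠ 0 := by
      intro h0
      have := key k d
      rw [← hg, h0] at this
      simp [hk] at this
      exact hd this.symm
    obtain ⟨lam, hlam⟩ : ∃ lam : σ → ℝ, MvPolynomial.eval lam g ≠ 0 := by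
      by_contra hall
      push_neg at hall
      exact hgne (MvPolynomial.funext (q := 0) (fun x => by simp [hall x]))
    have hdvd := h lam
    rw [hmap lam, Polynomial.X_pow_dvd_iff] at hdvd
    have := hdvd k hlt
    rw [Polynomial.coeff_map] at this
    exact hlam this
end
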